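/- There exists a closed Feynman graph P of the φ₃⁴-theory with two distinct color-0 edges k and l which separates boundary components: for all open Feynman graphs G and H of the φ₃⁴-theory (on vertex sets disjoint from each other and from P) possessing color-0 edges g and h respectively, the graph Y = G #_{g,k} P #_{l,h} H is again a Feynman graph of the φ₃⁴-theory, it is connected whenever G and H are connected, and its boundary graph is the disjoint union ∂Y = ∂G ⊔ ∂H; that is, the external vertices of Y are exactly those of G together with those of H, and for each color a ∈ {1,2,3} two external vertices of Y are joined by a color-a edge in ∂Y if and only if they both belong to G and are joined by a color-a edge in ∂G, or both belong to H and are joined by a color-a edge in ∂H. -/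

import Mathlib

/-!  Open colored graphs. -/

/-- An open `(D+1)`-colored graph with colors `{0,1,…,D}`: finite sets `W` (white) and
`B` (black) of vertices, bijections `σ c : W ≃ B` for the colors `c = 1,…,D` (indexed by
`Fin D`), and color-0 data: subsets `W₀ ⊆ W` and `B₀ ⊆ B` and a map `σ₀` which (for a
proper graph, see `OGraph.IsProper`) restricts to a bijection from `W₀` onto `B₀`; the
color-0 edges are the pairs `(w, σ₀ w)` with `w ∈ W₀`.  The vertices outside `W₀ ∪ B₀`
are the external vertices. -/
structure OGraph (D : ℕ) where
  W : Type
  B : Type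
  finW : Finite W
  finB : Finite B
  σ : Fin D → W ≃ B
  W₀ : Set W
  B₀ : Set B
  σ₀ : W → B

namespace OGraph

variable {D : ℕ}

/-- The color-0 data is a bijection from `W₀` onto `B₀`. -/
def IsProper (G : OGraph D) : Prop := Set.BijOn G.σ₀ G.W₀ G.B₀

/-- A closed graph is an open graph with no external vertices. -/
def IsClosed (G : OGraph D) : Prop := G.W₀ = Set.univ ∧ G.B₀ = Set.univ

/-- One step along a (0c)-bicolored path: from the white vertex `w` walk along the
color-`c` edge to `σ_c w` and then back along a color-0 edge to the white vertex `w'`. -/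
def Step (G : OGraph D) (c : Fin D) (w w' : G.W) : Prop :=
  w' ∈ G.W₀ ∧ G.σ c w ∈ G.B₀ ∧ G.σ₀ w' = G.σ c w

/-- Boundary adjacency (the color-`c` edges of the boundary graph `∂G`): the external
vertices `w` and `b` are the two endpoints of a maximal (0c)-bicolored path of `G`. -/
def BdryAdj (G : OGraph D) (c : Fin D) (w : G.W) (b : G.B) : Prop :=
  w ∉ G.W₀ ∧ b ∉ G.B₀ ∧
    ∃ w' : G.W, Relation.ReflTransGen (G.Step c) w w' ∧ G.σ c w' = b

/-- Adjacency of vertices of an open colored graph (an edge of any color joins them). -/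
def Adj (G : OGraph D) : G.W ⊕ G.B → G.W ⊕ G.B → Prop
  | Sum.inl w, Sum.inr b => (∃ c, G.σ c w = b) ∨ (w ∈ G.W₀ ∧ G.σ₀ w = b)
  | Sum.inr b, Sum.inl w => (∃ c, G.σ c w = b) ∨ (w ∈ G.W₀ ∧ G.σ₀ w = b)
  | Sum.inl _, Sum.inl _ => False
  | Sum.inr _, Sum.inr _ => False

/-- A graph is connected if any two of its vertices are joined by a path of edges. -/
def Connected (G : OGraph D) : Prop :=
  ∀ x y : G.W ⊕ G.B, Relation.ReflTransGen G.Adj x y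

/-- An open 4-colored graph (colors `{0,1,2,3}`; the colors `1,2,3` are indexed by
`Fin 3`) is a Feynman graph of the φ₃⁴-theory iff every connected component of the
3-colored graph obtained by deleting all color-0 edges is one of the quartic vertices
`V₁, V₂, V₃`: the white vertices pair up, `w` with a partner `w' ≠ w`, so that for some
color `i` the two edges at `w` of the colors `j ≠ i` end at the same black vertex as the
color-`i` edge of `w'`, and vice versa. -/
def Phi34 (G : OGraph 3) : Prop :=
  ∀ w : G.W, ∃ i : Fin 3, ∃ w' : G.W, w' ≠ w ∧
    (∀ j : Fin 3, j ≠ i → G.σ j w = G.σ i w') ∧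
    (∀ j : Fin 3, j ≠ i → G.σ j w' = G.σ i w)

/-- Connected sum of two open `(D+1)`-colored graphs along the color-0 edges
`(wg, σ₀ wg)` of `G` and `(wh, σ₀ wh)` of `H`: delete the two edges and add the color-0
edges `(wg, H.σ₀ wh)` and `(wh, G.σ₀ wg)`; all other edges are kept. -/
noncomputable def connSum0 (G H : OGraph D) (wg : G.W) (wh : H.W) : OGraph D where
  W := G.W ⊕ H.W
  B := G.B ⊕ H.B
  finW := by haveI := G.finW; haveI := H.finW; exact inferInstance
  finB := by haveI := G.finB; haveI := H.finB; exact inferInstance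
  σ := fun c => (G.σ c).sumCongr (H.σ c)
  W₀ := Sum.inl '' G.W₀ ∪ Sum.inr '' H.W₀
  B₀ := Sum.inl '' G.B₀ ∪ Sum.inr '' H.B₀
  σ₀ := fun x =>
    letI : DecidableEq (G.W ⊕ H.W) := Classical.decEq _
    if x = Sum.inl wg then Sum.inr (H.σ₀ wh)
    else if x = Sum.inr wh then Sum.inl (G.σ₀ wg)
    else Sum.map G.σ₀ H.σ₀ x

end OGraph

/-!
The separator `P` is made of two quartic vertices, and its color-0 edges `k` and `l` each lie in
one of them, parallel to an edge of another color. Deleting `k` and `l` from `P` leaves a graph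
whose bicolored paths join the two ends of `k` to each other, and the two ends of `l` to each
other (`IsSeparating`). So in `Y = G #_{g,k} P #_{l,h} H` a bicolored path of `G` that used the
deleted edge `g` enters `P` at `k` and comes back to `G` at the other end of `g`, and likewise
for `H`: every boundary edge of `G` or `H` is a boundary edge of `Y`. Bicolored paths are
deterministic, so an external vertex has exactly one boundary partner in each color (it has one
because the graph is finite), and this inclusion `∂G ⊔ ∂H ⊆ ∂Y` is therefore an equality.
Connectivity survives the surgery because the edges parallel to `k` and `l` bridge the deleted
edges.
-/

open Function Relation

theorem Set.BijOn.sumMap {α β γ δ : Type*} {f : α → β} {f' : γ → δ} {s : Set α} {t : Set β}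
    {s' : Set γ} {t' : Set δ} (hf : Set.BijOn f s t) (hf' : Set.BijOn f' s' t') :
    Set.BijOn (Sum.map f f') (Sum.inl '' s ∪ Sum.inr '' s') (Sum.inl '' t ∪ Sum.inr '' t') := by
  refine ⟨?_, ?_, ?_⟩
  · rintro _ (⟨a, ha, rfl⟩ | ⟨a, ha, rfl⟩)
    exacts [.inl ⟨_, hf.mapsTo ha, rfl⟩, .inr ⟨_, hf'.mapsTo ha, rfl⟩]
  · rintro _ (⟨a, ha, rfl⟩ | ⟨a, ha, rfl⟩) _ (⟨b, hb, rfl⟩ | ⟨b, hb, rfl⟩) h <;>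
      simp only [Sum.map_inl, Sum.map_inr, Sum.inl.injEq, Sum.inr.injEq, reduceCtorEq] at h ⊢
    exacts [hf.injOn ha hb h, hf'.injOn ha hb h]
  · rintro _ (⟨b, hb, rfl⟩ | ⟨b, hb, rfl⟩)
    · obtain ⟨a, ha, rfl⟩ := hf.surjOn hb
      exact ⟨.inl a, .inl ⟨a, ha, rfl⟩, rfl⟩
    · obtain ⟨a, ha, rfl⟩ := hf'.surjOn hb
      exact ⟨.inr a, .inr ⟨a, ha, rfl⟩, rfl⟩

theorem Relator.LeftUnique.injective_of_chain {α : Type*} {r : α → α → Prop}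
    (hr : Relator.LeftUnique r) {s : ℕ → α} (hs : ∀ n, r (s n) (s (n + 1)))
    (h₀ : ∀ a, ¬ r a (s 0)) : Injective s := by
  suffices hne : ∀ i d, s i ≠ s (i + d + 1) by
    intro i j hij
    by_contra hij'
    rcases Nat.lt_or_gt_of_ne hij' with h | h
    · obtain ⟨d, rfl⟩ := Nat.exists_eq_add_of_lt h
      exact hne i d hij
    · obtain ⟨d, rfl⟩ := Nat.exists_eq_add_of_lt h
      exact hne j d hij.symm
  intro i
  induction i with
  | zero => exact fun d h => h₀ _ (h ▸ hs (0 + d))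
  | succ i ih =>
    intro d h
    refine ih d (hr (hs i) ?_)
    rw [h, show i + 1 + d + 1 = i + d + 1 + 1 by omega]
    exact hs _

namespace OGraph

variable {D : ℕ}

protected theorem Adj.symm {G : OGraph D} : ∀ {x y : G.W ⊕ G.B}, G.Adj x y → G.Adj y x
  | .inl _, .inr _, h => h
  | .inr _, .inl _, h => h

instance (G : OGraph D) : Std.Symm G.Adj := ⟨fun _ _ => Adj.symm⟩

theorem IsClosed.mem_W₀ {G : OGraph D} (hG : G.IsClosed) (w : G.W) : w ∈ G.W₀ :=
  hG.1 ▸ trivial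

theorem connected_of_forall_reflTransGen {G : OGraph D} (x₀ : G.W ⊕ G.B)
    (h : ∀ z, ReflTransGen G.Adj x₀ z) : G.Connected :=
  fun x y => (symm_of _ (h x)).trans (h y)

theorem reflTransGen_adj_map {G G' : OGraph D} (eW : G.W → G'.W) (eB : G.B → G'.B) (g : G.W)
    (hσ : ∀ c w, G'.σ c (eW w) = eB (G.σ c w))
    (hσ₀ : ∀ w ∈ G.W₀, w ≠ g → eW w ∈ G'.W₀ ∧ G'.σ₀ (eW w) = eB (G.σ₀ w))
    (hg : ReflTransGen G'.Adj (.inl (eW g)) (.inr (eB (G.σ₀ g))))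
    {x y : G.W ⊕ G.B} (h : ReflTransGen G.Adj x y) :
    ReflTransGen G'.Adj (Sum.map eW eB x) (Sum.map eW eB y) := by
  have hwb : ∀ w b, G.Adj (.inl w) (.inr b) →
      ReflTransGen G'.Adj (.inl (eW w)) (.inr (eB b)) := by
    rintro w b (⟨c, rfl⟩ | ⟨hw, rfl⟩)
    · exact .single (.inl ⟨c, hσ c w⟩)
    · by_cases hwg : w = g
      · exact hwg ▸ hg
      · exact .single (.inr (hσ₀ w hw hwg))
  refine h.lift' _ ?_
  rintro (w | b) (w' | b') hxy
  · exact hxy.elim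
  · exact hwb w b' hxy
  · exact symm_of _ (hwb w' b hxy.symm)
  · exact hxy.elim

section Boundary

variable {G : OGraph D} {c : Fin D}

theorem step_leftUnique (G : OGraph D) (c : Fin D) : Relator.LeftUnique (G.Step c) :=
  fun _ _ _ h₁ h₂ => (G.σ c).injective (h₁.2.2.symm.trans h₂.2.2)

theorem IsProper.step_rightUnique (hG : G.IsProper) : Relator.RightUnique (G.Step c) :=
  fun _ _ _ h₁ h₂ => hG.injOn h₁.1 h₂.1 (h₁.2.2.trans h₂.2.2.symm)

theorem IsProper.bdryAdj_unique (hG : G.IsProper) {w : G.W} {b b' : G.B}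
    (h : G.BdryAdj c w b) (h' : G.BdryAdj c w b') : b = b' := by
  obtain ⟨-, hb, w₁, h₁, rfl⟩ := h
  obtain ⟨-, hb', w₂, h₂, rfl⟩ := h'
  have stuck {u v} (huv : ReflTransGen (G.Step c) u v) (hu : G.σ c u ∉ G.B₀) : u = v := by
    rcases huv.cases_head with rfl | ⟨_, hstep, -⟩
    · rfl
    · exact absurd hstep.2.1 hu
  rcases h₁.total_of_right_unique hG.step_rightUnique h₂ with h | h
  · rw [stuck h hb]
  · rw [stuck h hb']

/-- The bicolored path from an external vertex never revisits a vertex (`Step` is left unique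
and nothing steps into an external vertex), so by finiteness it ends. -/
theorem IsProper.exists_bdryAdj (hG : G.IsProper) (c : Fin D) {w : G.W} (hw : w ∉ G.W₀) :
    ∃ b, G.BdryAdj c w b := by
  have := G.finW
  by_contra! hno
  have hnext : ∀ z, ReflTransGen (G.Step c) w z → ∃ z', G.Step c z z' := by
    intro z hz
    have hz₀ : G.σ c z ∈ G.B₀ := by
      by_contra h
      exact hno _ ⟨hw, h, z, hz, rfl⟩
    obtain ⟨z', hz', he⟩ := hG.surjOn hz₀
    exact ⟨z', hz', hz₀, he⟩
  choose! next hnext using hnext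
  have hreach : ∀ n, ReflTransGen (G.Step c) w (next^[n] w) := by
    intro n
    induction n with
    | zero => exact .refl
    | succ n ih => rw [iterate_succ_apply']; exact ih.tail (hnext _ ih)
  refine not_injective_infinite_finite (fun n => next^[n] w)
    ((G.step_leftUnique c).injective_of_chain (fun n => ?_) (fun _ h => hw h.1))
  rw [iterate_succ_apply']
  exact hnext _ (hreach n)

theorem BdryAdj.map {G' : OGraph D} (eW : G.W → G'.W) (eB : G.B → G'.B)
    (hσ : ∀ u, G'.σ c (eW u) = eB (G.σ c u)) (hW : ∀ w, w ∉ G.W₀ → eW w ∉ G'.W₀)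
    (hB : ∀ b, b ∉ G.B₀ → eB b ∉ G'.B₀)
    (hstep : ∀ u u', G.Step c u u' → ReflTransGen (G'.Step c) (eW u) (eW u'))
    {w : G.W} {b : G.B} (h : G.BdryAdj c w b) : G'.BdryAdj c (eW w) (eB b) := by
  obtain ⟨hw, hb, w', hp, rfl⟩ := h
  exact ⟨hW w hw, hB _ hb, eW w', hp.lift' eW hstep, hσ w'⟩

end Boundary

section ConnSum

variable {G K : OGraph D} {g : G.W} {k : K.W}

@[simp] theorem connSum0_σ_inl (c : Fin D) (u : G.W) :
    (connSum0 G K g k).σ c (.inl u) = .inl (G.σ c u) := rfl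

@[simp] theorem connSum0_σ_inr (c : Fin D) (p : K.W) :
    (connSum0 G K g k).σ c (.inr p) = .inr (K.σ c p) := rfl

@[simp] theorem inl_mem_connSum0_W₀ {u : G.W} : .inl u ∈ (connSum0 G K g k).W₀ ↔ u ∈ G.W₀ := by
  show Sum.inl u ∈ Sum.inl '' G.W₀ ∪ Sum.inr '' K.W₀ ↔ _
  simp

@[simp] theorem inr_mem_connSum0_W₀ {p : K.W} : .inr p ∈ (connSum0 G K g k).W₀ ↔ p ∈ K.W₀ := by
  show Sum.inr p ∈ Sum.inl '' G.W₀ ∪ Sum.inr '' K.W₀ ↔ _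
  simp

@[simp] theorem inl_mem_connSum0_B₀ {b : G.B} : .inl b ∈ (connSum0 G K g k).B₀ ↔ b ∈ G.B₀ := by
  show Sum.inl b ∈ Sum.inl '' G.B₀ ∪ Sum.inr '' K.B₀ ↔ _
  simp

@[simp] theorem inr_mem_connSum0_B₀ {b : K.B} : .inr b ∈ (connSum0 G K g k).B₀ ↔ b ∈ K.B₀ := by
  show Sum.inr b ∈ Sum.inl '' G.B₀ ∪ Sum.inr '' K.B₀ ↔ _
  simp

open scoped Classical in
theorem connSum0_σ₀ : (connSum0 G K g k).σ₀ =
    Sum.map G.σ₀ K.σ₀ ∘ Equiv.swap (Sum.inl g) (Sum.inr k) := by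
  funext (x : G.W ⊕ K.W)
  rcases eq_or_ne x (.inl g) with rfl | h₁
  · simp [connSum0]
  rcases eq_or_ne x (.inr k) with rfl | h₂
  · simp [connSum0]
  simp [connSum0, Equiv.swap_apply_of_ne_of_ne h₁ h₂, h₁, h₂]

@[simp] theorem connSum0_σ₀_inl_self : (connSum0 G K g k).σ₀ (.inl g) = .inr (K.σ₀ k) := by
  simp [connSum0]

@[simp] theorem connSum0_σ₀_inr_self : (connSum0 G K g k).σ₀ (.inr k) = .inl (G.σ₀ g) := by
  simp [connSum0]

theorem connSum0_σ₀_inl {u : G.W} (hu : u ≠ g) :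
    (connSum0 G K g k).σ₀ (.inl u) = .inl (G.σ₀ u) := by
  simp [connSum0, hu]

theorem connSum0_σ₀_inr {p : K.W} (hp : p ≠ k) :
    (connSum0 G K g k).σ₀ (.inr p) = .inr (K.σ₀ p) := by
  simp [connSum0, hp]

open scoped Classical in
theorem isProper_connSum0 (hG : G.IsProper) (hK : K.IsProper) (hg : g ∈ G.W₀)
    (hk : k ∈ K.W₀) : (connSum0 G K g k).IsProper := by
  rw [IsProper, connSum0_σ₀]
  exact (hG.sumMap hK).comp (Equiv.swap_bijOn_self (s := Sum.inl '' G.W₀ ∪ Sum.inr '' K.W₀)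
    (iff_of_true (.inl ⟨g, hg, rfl⟩) (.inr ⟨k, hk, rfl⟩)))

theorem phi34_connSum0 {G K : OGraph 3} (hG : G.Phi34) (hK : K.Phi34) (g : G.W) (k : K.W) :
    (connSum0 G K g k).Phi34 := by
  rintro (w | w)
  · obtain ⟨i, w', hne, h₁, h₂⟩ := hG w
    exact ⟨i, .inl w', Sum.inl_injective.ne hne, fun j hj => congrArg Sum.inl (h₁ j hj),
      fun j hj => congrArg Sum.inl (h₂ j hj)⟩
  · obtain ⟨i, w', hne, h₁, h₂⟩ := hK w
    exact ⟨i, .inr w', Sum.inr_injective.ne hne, fun j hj => congrArg Sum.inr (h₁ j hj),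
      fun j hj => congrArg Sum.inr (h₂ j hj)⟩

section Step

variable {c : Fin D}

theorem Step.connSum0_inl {u u' : G.W} (h : G.Step c u u') (hu' : u' ≠ g) :
    (connSum0 G K g k).Step c (.inl u) (.inl u') :=
  ⟨by simpa using h.1, by simpa using h.2.1, by rw [connSum0_σ₀_inl hu']; exact congrArg _ h.2.2⟩

theorem Step.connSum0_inr {p p' : K.W} (h : K.Step c p p') (hp' : p' ≠ k) :
    (connSum0 G K g k).Step c (.inr p) (.inr p') :=
  ⟨by simpa using h.1, by simpa using h.2.1, by rw [connSum0_σ₀_inr hp']; exact congrArg _ h.2.2⟩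

theorem Step.connSum0_inl_self {u : G.W} (h : G.Step c u g) (hk : k ∈ K.W₀) :
    (connSum0 G K g k).Step c (.inl u) (.inr k) :=
  ⟨by simpa using hk, by simpa using h.2.1, by rw [connSum0_σ₀_inr_self]; exact congrArg _ h.2.2⟩

theorem Step.connSum0_inr_self {p : K.W} (h : K.Step c p k) (hg : g ∈ G.W₀) :
    (connSum0 G K g k).Step c (.inr p) (.inl g) :=
  ⟨by simpa using hg, by simpa using h.2.1, by rw [connSum0_σ₀_inl_self]; exact congrArg _ h.2.2⟩

end Step

/-- The edge doubling one deleted color-0 edge joins its two ends; through it and the two new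
color-0 edges, the two ends of the other deleted edge are joined as well. -/
theorem connected_connSum0 (hG : G.Connected) (hK : K.Connected) (hg : g ∈ G.W₀)
    (hk : k ∈ K.W₀) (hpar : (∃ c, G.σ c g = G.σ₀ g) ∨ ∃ c, K.σ c k = K.σ₀ k) :
    (connSum0 G K g k).Connected := by
  have e_g : (connSum0 G K g k).Adj (.inl (.inl g)) (.inr (.inr (K.σ₀ k))) :=
    .inr ⟨by simpa using hg, connSum0_σ₀_inl_self⟩
  have e_k : (connSum0 G K g k).Adj (.inl (.inr k)) (.inr (.inl (G.σ₀ g))) :=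
    .inr ⟨by simpa using hk, connSum0_σ₀_inr_self⟩
  have hgk : ReflTransGen (connSum0 G K g k).Adj (.inl (.inl g)) (.inr (.inl (G.σ₀ g))) ∧
      ReflTransGen (connSum0 G K g k).Adj (.inl (.inr k)) (.inr (.inr (K.σ₀ k))) := by
    rcases hpar with ⟨c, hc⟩ | ⟨c, hc⟩
    · have e : (connSum0 G K g k).Adj (.inl (.inl g)) (.inr (.inl (G.σ₀ g))) :=
        .inl ⟨c, congrArg Sum.inl hc⟩
      exact ⟨.single e, .head e_k (.head e.symm (.single e_g))⟩
    · have e : (connSum0 G K g k).Adj (.inl (.inr k)) (.inr (.inr (K.σ₀ k))) :=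
        .inl ⟨c, congrArg Sum.inr hc⟩
      exact ⟨.head e_g (.head e.symm (.single e_k)), .single e⟩
  have liftG {x y} (h : ReflTransGen G.Adj x y) :=
    reflTransGen_adj_map (G' := connSum0 G K g k) Sum.inl Sum.inl g (fun _ _ => rfl)
      (fun _ hw hwg => ⟨by simpa using hw, connSum0_σ₀_inl hwg⟩) hgk.1 h
  have liftK {x y} (h : ReflTransGen K.Adj x y) :=
    reflTransGen_adj_map (G' := connSum0 G K g k) Sum.inr Sum.inr k (fun _ _ => rfl)
      (fun _ hp hpk => ⟨by simpa using hp, connSum0_σ₀_inr hpk⟩) hgk.2 h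
  refine connected_of_forall_reflTransGen (.inl (.inl g)) ?_
  rintro ((w | p) | (b | b))
  · exact liftG (hG (.inl g) (.inl w))
  · exact .head e_g (liftK (hK (.inr (K.σ₀ k)) (.inl p)))
  · exact liftG (hG (.inl g) (.inr b))
  · exact .head e_g (liftK (hK (.inr (K.σ₀ k)) (.inr b)))

end ConnSum

section Separating

abbrev cut (P : OGraph D) (k l : P.W) : OGraph D :=
  { P with W₀ := P.W₀ \ {k, l}, B₀ := P.B₀ \ {P.σ₀ k, P.σ₀ l} }

/-- In `P` with the color-0 edges `k` and `l` deleted, every bicolored path leaving one end of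
`k` comes back at the other end of `k`, and likewise for `l`. -/
def IsSeparating (P : OGraph D) (k l : P.W) : Prop :=
  ∀ c, (P.cut k l).BdryAdj c k (P.σ₀ k) ∧ (P.cut k l).BdryAdj c l (P.σ₀ l)

theorem cut_step_iff {P : OGraph D} {k l : P.W} {c : Fin D} {p p' : P.W} :
    (P.cut k l).Step c p p' ↔
      P.Step c p p' ∧ p' ≠ k ∧ p' ≠ l ∧ P.σ c p ≠ P.σ₀ k ∧ P.σ c p ≠ P.σ₀ l := by
  simp only [Step, cut, Set.mem_sdiff, Set.mem_insert_iff, Set.mem_singleton_iff]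
  tauto

theorem cut_bdryAdj_iff {P : OGraph D} {k l : P.W} {c : Fin D} {q : P.W} (hq : q = k ∨ q = l) :
    (P.cut k l).BdryAdj c q (P.σ₀ q) ↔
      ∃ w, ReflTransGen ((P.cut k l).Step c) q w ∧ P.σ c w = P.σ₀ q := by
  simp only [BdryAdj, cut, Set.mem_sdiff, Set.mem_insert_iff, Set.mem_singleton_iff]
  tauto

variable {G P H : OGraph D} {wg : G.W} {k l : P.W} {wh : H.W} {c : Fin D}

theorem isProper_connSum0_connSum0 (hG : G.IsProper) (hP : P.IsProper) (hH : H.IsProper)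
    (hPc : P.IsClosed) (hwg : wg ∈ G.W₀) (hwh : wh ∈ H.W₀) :
    (connSum0 (connSum0 G P wg k) H (.inr l) wh).IsProper :=
  isProper_connSum0 (isProper_connSum0 hG hP hwg (hPc.mem_W₀ _)) hH
    (inr_mem_connSum0_W₀.2 (hPc.mem_W₀ l)) hwh

theorem phi34_connSum0_connSum0 {G P H : OGraph 3} (hG : G.Phi34) (hP : P.Phi34) (hH : H.Phi34)
    (wg : G.W) (k l : P.W) (wh : H.W) : (connSum0 (connSum0 G P wg k) H (.inr l) wh).Phi34 :=
  phi34_connSum0 (phi34_connSum0 hG hP wg k) hH _ wh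

theorem connected_connSum0_connSum0 (hG : G.Connected) (hP : P.Connected) (hH : H.Connected)
    (hPc : P.IsClosed) (hkl : k ≠ l) (hwg : wg ∈ G.W₀) (hwh : wh ∈ H.W₀)
    (hk : ∃ c, P.σ c k = P.σ₀ k) (hl : ∃ c, P.σ c l = P.σ₀ l) :
    (connSum0 (connSum0 G P wg k) H (.inr l) wh).Connected := by
  refine connected_connSum0 (connected_connSum0 hG hP hwg (hPc.mem_W₀ _) (.inr hk)) hH
    (inr_mem_connSum0_W₀.2 (hPc.mem_W₀ l)) hwh (.inl ?_)
  obtain ⟨c, hc⟩ := hl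
  exact ⟨c, by rw [connSum0_σ_inr, connSum0_σ₀_inr hkl.symm, hc]⟩

theorem notMem_W₀_connSum0_connSum0_iff (hPc : P.IsClosed)
    (x : (connSum0 (connSum0 G P wg k) H (.inr l) wh).W) :
    x ∉ (connSum0 (connSum0 G P wg k) H (.inr l) wh).W₀ ↔
      (∃ w : G.W, w ∉ G.W₀ ∧ x = .inl (.inl w)) ∨ (∃ w : H.W, w ∉ H.W₀ ∧ x = .inr w) := by
  revert x
  change ∀ x : (G.W ⊕ P.W) ⊕ H.W,
    x ∉ Sum.inl '' (Sum.inl '' G.W₀ ∪ Sum.inr '' P.W₀) ∪ Sum.inr '' H.W₀ ↔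
      (∃ w, w ∉ G.W₀ ∧ x = .inl (.inl w)) ∨ (∃ w, w ∉ H.W₀ ∧ x = .inr w)
  rintro ((u | p) | v) <;> simp [hPc.1]

theorem notMem_B₀_connSum0_connSum0_iff (hPc : P.IsClosed)
    (y : (connSum0 (connSum0 G P wg k) H (.inr l) wh).B) :
    y ∉ (connSum0 (connSum0 G P wg k) H (.inr l) wh).B₀ ↔
      (∃ v : G.B, v ∉ G.B₀ ∧ y = .inl (.inl v)) ∨ (∃ v : H.B, v ∉ H.B₀ ∧ y = .inr v) := by
  revert y
  change ∀ y : (G.B ⊕ P.B) ⊕ H.B,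
    y ∉ Sum.inl '' (Sum.inl '' G.B₀ ∪ Sum.inr '' P.B₀) ∪ Sum.inr '' H.B₀ ↔
      (∃ v, v ∉ G.B₀ ∧ y = .inl (.inl v)) ∨ (∃ v, v ∉ H.B₀ ∧ y = .inr v)
  rintro ((u | p) | v) <;> simp [hPc.2]

theorem Step.connSum0_connSum0_of_cut {p p' : P.W} (h : (P.cut k l).Step c p p') :
    (connSum0 (connSum0 G P wg k) H (.inr l) wh).Step c (.inl (.inr p)) (.inl (.inr p')) := by
  obtain ⟨h, hk, hl, -⟩ := cut_step_iff.1 h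
  exact (h.connSum0_inr hk).connSum0_inl (Sum.inr_injective.ne hl)

theorem BdryAdj.reflTransGen_connSum0_connSum0_left (hsep : (P.cut k l).BdryAdj c k (P.σ₀ k))
    (hP : P.IsProper) (hk : k ∈ P.W₀) (hwg : wg ∈ G.W₀) :
    ReflTransGen ((connSum0 (connSum0 G P wg k) H (.inr l) wh).Step c)
      (.inl (.inr k)) (.inl (.inl wg)) := by
  obtain ⟨-, -, p, hpath, hp⟩ := hsep
  have hexit : P.Step c p k := ⟨hk, hp ▸ hP.mapsTo hk, hp.symm⟩
  exact (hpath.lift _ fun _ _ h => h.connSum0_connSum0_of_cut).tail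
    ((hexit.connSum0_inr_self hwg).connSum0_inl Sum.inl_ne_inr)

theorem BdryAdj.reflTransGen_connSum0_connSum0_right (hsep : (P.cut k l).BdryAdj c l (P.σ₀ l))
    (hP : P.IsProper) (hl : l ∈ P.W₀) (hkl : k ≠ l) (hwh : wh ∈ H.W₀) :
    ReflTransGen ((connSum0 (connSum0 G P wg k) H (.inr l) wh).Step c)
      (.inl (.inr l)) (.inr wh) := by
  obtain ⟨-, -, p, hpath, hp⟩ := hsep
  have hexit : P.Step c p l := ⟨hl, hp ▸ hP.mapsTo hl, hp.symm⟩
  exact (hpath.lift _ fun _ _ h => h.connSum0_connSum0_of_cut).tail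
    ((hexit.connSum0_inr hkl.symm).connSum0_inl_self hwh)

theorem Step.reflTransGen_connSum0_connSum0_inl (hP : P.IsProper) (hPc : P.IsClosed) (hkl : k ≠ l)
    (hsep : P.IsSeparating k l) (hwg : wg ∈ G.W₀) {u u' : G.W} (h : G.Step c u u') :
    ReflTransGen ((connSum0 (connSum0 G P wg k) H (.inr l) wh).Step c)
      (.inl (.inl u)) (.inl (.inl u')) := by
  by_cases hu' : u' = wg
  · subst hu'
    exact .head ((h.connSum0_inl_self (hPc.mem_W₀ _)).connSum0_inl (Sum.inr_injective.ne hkl))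
      ((hsep c).1.reflTransGen_connSum0_connSum0_left hP (hPc.mem_W₀ _) hwg)
  · exact .single ((h.connSum0_inl hu').connSum0_inl Sum.inl_ne_inr)

theorem Step.reflTransGen_connSum0_connSum0_inr (hP : P.IsProper) (hPc : P.IsClosed) (hkl : k ≠ l)
    (hsep : P.IsSeparating k l) (hwh : wh ∈ H.W₀) {v v' : H.W} (h : H.Step c v v') :
    ReflTransGen ((connSum0 (connSum0 G P wg k) H (.inr l) wh).Step c) (.inr v) (.inr v') := by
  by_cases hv' : v' = wh
  · subst hv'
    exact .head (h.connSum0_inr_self (inr_mem_connSum0_W₀.2 (hPc.mem_W₀ l)))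
      ((hsep c).2.reflTransGen_connSum0_connSum0_right hP (hPc.mem_W₀ _) hkl hwh)
  · exact .single (h.connSum0_inr hv')

theorem BdryAdj.connSum0_connSum0_inl (hP : P.IsProper) (hPc : P.IsClosed) (hkl : k ≠ l)
    (hsep : P.IsSeparating k l) (hwg : wg ∈ G.W₀) {w : G.W} {v : G.B} (h : G.BdryAdj c w v) :
    (connSum0 (connSum0 G P wg k) H (.inr l) wh).BdryAdj c (.inl (.inl w)) (.inl (.inl v)) :=
  h.map (G' := connSum0 (connSum0 G P wg k) H (.inr l) wh) (fun u => .inl (.inl u))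
    (fun b => .inl (.inl b)) (fun _ => rfl)
    (fun _ => mt (inl_mem_connSum0_W₀.1 ∘ inl_mem_connSum0_W₀.1))
    (fun _ => mt (inl_mem_connSum0_B₀.1 ∘ inl_mem_connSum0_B₀.1))
    fun _ _ h => h.reflTransGen_connSum0_connSum0_inl hP hPc hkl hsep hwg

theorem BdryAdj.connSum0_connSum0_inr (hP : P.IsProper) (hPc : P.IsClosed) (hkl : k ≠ l)
    (hsep : P.IsSeparating k l) (hwh : wh ∈ H.W₀) {w : H.W} {v : H.B} (h : H.BdryAdj c w v) :
    (connSum0 (connSum0 G P wg k) H (.inr l) wh).BdryAdj c (.inr w) (.inr v) :=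
  h.map (G' := connSum0 (connSum0 G P wg k) H (.inr l) wh) (fun u => .inr u) (fun b => .inr b)
    (fun _ => rfl) (fun _ => mt inr_mem_connSum0_W₀.1) (fun _ => mt inr_mem_connSum0_B₀.1)
    fun _ _ h => h.reflTransGen_connSum0_connSum0_inr hP hPc hkl hsep hwh

theorem bdryAdj_connSum0_connSum0_iff (hG : G.IsProper) (hP : P.IsProper) (hH : H.IsProper)
    (hPc : P.IsClosed) (hkl : k ≠ l) (hsep : P.IsSeparating k l) (hwg : wg ∈ G.W₀)
    (hwh : wh ∈ H.W₀) (x : (connSum0 (connSum0 G P wg k) H (.inr l) wh).W)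
    (y : (connSum0 (connSum0 G P wg k) H (.inr l) wh).B) :
    (connSum0 (connSum0 G P wg k) H (.inr l) wh).BdryAdj c x y ↔
      (∃ w v, x = .inl (.inl w) ∧ y = .inl (.inl v) ∧ G.BdryAdj c w v) ∨
        (∃ w v, x = .inr w ∧ y = .inr v ∧ H.BdryAdj c w v) := by
  have hY := isProper_connSum0_connSum0 (k := k) (l := l) (H := H) hG hP hH hPc hwg hwh
  constructor
  · intro h
    rcases (notMem_W₀_connSum0_connSum0_iff hPc x).1 h.1 with ⟨w, hw, rfl⟩ | ⟨w, hw, rfl⟩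
    · obtain ⟨v, hv⟩ := hG.exists_bdryAdj c hw
      exact .inl ⟨w, v, rfl, hY.bdryAdj_unique h (hv.connSum0_connSum0_inl hP hPc hkl hsep hwg), hv⟩
    · obtain ⟨v, hv⟩ := hH.exists_bdryAdj c hw
      exact .inr ⟨w, v, rfl, hY.bdryAdj_unique h (hv.connSum0_connSum0_inr hP hPc hkl hsep hwh), hv⟩
  · rintro (⟨w, v, rfl, rfl, h⟩ | ⟨w, v, rfl, rfl, h⟩)
    exacts [h.connSum0_connSum0_inl hP hPc hkl hsep hwg,
      h.connSum0_connSum0_inr hP hPc hkl hsep hwh]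

end Separating

/-- Two quartic vertices, `{0, 1}` of type `V₁` and `{2, 3}` of type `V₂`, joined by the color-0
edges `1 – 3` and `3 – 1`. The color-0 edge `0 – 0` runs parallel to the edges of colors 2 and 3
at the white vertex `0`, and `2 – 2` to those of colors 1 and 3 at `2` (the index `c : Fin 3`
stands for the color `c + 1`). -/
abbrev separator : OGraph 3 where
  W := Fin 4
  B := Fin 4
  finW := inferInstance
  finB := inferInstance
  σ := ![Equiv.swap 0 1, Equiv.swap 2 3, Equiv.refl _]
  W₀ := Set.univ
  B₀ := Set.univ
  σ₀ := Equiv.swap 1 3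

namespace separator

theorem isProper : separator.IsProper := (Equiv.swap (1 : Fin 4) 3).bijective.bijOn_univ

theorem isClosed : separator.IsClosed := ⟨rfl, rfl⟩

theorem phi34 : separator.Phi34 := by unfold Phi34; decide

theorem connected : separator.Connected := by
  have adj : ∀ w b : Fin 4, ((∃ c, separator.σ c w = b) ∨ separator.σ₀ w = b) →
      separator.Adj (.inl w) (.inr b) := fun _ _ h => h.imp id fun h => ⟨trivial, h⟩
  have e (w b : Fin 4) (h) := ReflTransGen.single (adj w b h)
  have e' (w b : Fin 4) (h) := ReflTransGen.single (adj w b h).symm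
  have b0 : ReflTransGen separator.Adj (.inl 0) (.inr 0) := e 0 0 (by decide)
  have b1 : ReflTransGen separator.Adj (.inl 0) (.inr 1) := e 0 1 (by decide)
  have w1 := b0.trans (e' 1 0 (by decide))
  have b3 := w1.trans (e 1 3 (by decide))
  have w3 := b3.trans (e' 3 3 (by decide))
  have b2 := w3.trans (e 3 2 (by decide))
  have w2 := b2.trans (e' 2 2 (by decide))
  refine connected_of_forall_reflTransGen (.inl 0) ?_
  rintro (w | w) <;> fin_cases w <;> first | exact .refl | assumption

theorem isSeparating : separator.IsSeparating 0 2 := by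
  have step : ∀ (c : Fin 3) (p p' : Fin 4), p' ≠ 0 ∧ p' ≠ 2 ∧ separator.σ c p ≠ 0 ∧
      separator.σ c p ≠ 2 ∧ separator.σ₀ p' = separator.σ c p →
      (separator.cut 0 2).Step c p p' := by
    simp only [Step]
    decide
  intro c
  rw [cut_bdryAdj_iff (.inl rfl), cut_bdryAdj_iff (.inr rfl)]
  fin_cases c
  · exact ⟨⟨1, .head (step 0 0 3 (by decide)) (.single (step 0 3 1 (by decide))), rfl⟩,
      ⟨2, .refl, rfl⟩⟩
  · exact ⟨⟨0, .refl, rfl⟩,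
      ⟨3, .head (step 1 2 1 (by decide)) (.single (step 1 1 3 (by decide))), rfl⟩⟩
  · exact ⟨⟨0, .refl, rfl⟩, ⟨2, .refl, rfl⟩⟩

end separator

end OGraph

/-- There exists a closed Feynman graph `P` of the φ₃⁴-theory with two
distinct color-0 edges `k` and `l` (determined by their white endpoints) which separates
boundary components: for all open Feynman graphs `G` and `H` of the φ₃⁴-theory with
color-0 edges `g` (white endpoint `wg ∈ W₀(G)`) and `h` (white endpoint `wh ∈ W₀(H)`),
the graph `Y = G #_{g,k} P #_{l,h} H` is again a Feynman graph of the φ₃⁴-theory, it is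
connected whenever `G` and `H` are, its external vertices are exactly those of `G`
together with those of `H`, and for each color `a ∈ {1,2,3}` two external vertices of
`Y` are joined by a color-`a` boundary edge iff they both come from `G` and are joined
by a color-`a` edge in `∂G`, or both come from `H` and are joined by a color-`a` edge
in `∂H`; that is, `∂Y = ∂G ⊔ ∂H`. -/
theorem separating_graph_exists :
    ∃ (P : OGraph 3) (k l : P.W), P.IsProper ∧ P.IsClosed ∧ P.Phi34 ∧ k ≠ l ∧
      ∀ (G H : OGraph 3), G.IsProper → H.IsProper → G.Phi34 → H.Phi34 →
        ∀ (wg : G.W), wg ∈ G.W₀ → ∀ (wh : H.W), wh ∈ H.W₀ →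
          let Y : OGraph 3 := OGraph.connSum0 (OGraph.connSum0 G P wg k) H (Sum.inr l) wh
          Y.IsProper ∧ Y.Phi34 ∧
          (G.Connected → H.Connected → Y.Connected) ∧
          (∀ x : Y.W, x ∉ Y.W₀ ↔
            ((∃ w : G.W, w ∉ G.W₀ ∧ x = Sum.inl (Sum.inl w)) ∨
             (∃ w : H.W, w ∉ H.W₀ ∧ x = Sum.inr w))) ∧
          (∀ y : Y.B, y ∉ Y.B₀ ↔
            ((∃ v : G.B, v ∉ G.B₀ ∧ y = Sum.inl (Sum.inl v)) ∨
             (∃ v : H.B, v ∉ H.B₀ ∧ y = Sum.inr v))) ∧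
          (∀ (a : Fin 3) (x : Y.W) (y : Y.B),
            Y.BdryAdj a x y ↔
              ((∃ w : G.W, ∃ v : G.B, x = Sum.inl (Sum.inl w) ∧ y = Sum.inl (Sum.inl v) ∧
                  G.BdryAdj a w v) ∨
               (∃ w : H.W, ∃ v : H.B, x = Sum.inr w ∧ y = Sum.inr v ∧
                  H.BdryAdj a w v))) := by
  open OGraph separator in
  have hkl : (0 : separator.W) ≠ 2 := by decide
  refine ⟨separator, 0, 2, isProper, isClosed, phi34, hkl, ?_⟩
  intro G H hG hH hfG hfH wg hwg wh hwh
  exact ⟨isProper_connSum0_connSum0 hG isProper hH isClosed hwg hwh,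
    phi34_connSum0_connSum0 hfG phi34 hfH wg 0 2 wh,
    fun hGc hHc => connected_connSum0_connSum0 hGc connected hHc isClosed hkl hwg hwh
      ⟨1, rfl⟩ ⟨0, rfl⟩,
    notMem_W₀_connSum0_connSum0_iff isClosed,
    notMem_B₀_connSum0_connSum0_iff isClosed,
    fun _ => bdryAdj_connSum0_connSum0_iff hG isProper hH isClosed hkl isSeparating hwg hwh⟩
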